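/- Let J ⊆ {1,…,n}, y ∈ W, and {n_β : β ∈ Φ⁺ ∖ Φ_J⁺} a collection of integers. If the (J,y)-sector S_{J,y}({n_β}) contains more than one alcove (equivalently, is not a single alcove), then it contains an infinite combinatorial gallery that is minimal and regular with respect to S_{J,y}({n_β}). -/

import Mathlib

open scoped RealInnerProductSpace
open scoped Classical

noncomputable section

/-- The ambient Euclidean space `V = ℝⁿ`. -/
abbrev V (n : ℕ) : Type := EuclideanSpace ℝ (Fin n)

/-- The data of an irreducible crystallographic (reduced) root system in `ℝⁿ`,
together with a choice of positive roots, simple roots and highest root. -/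
structure RootData (n : ℕ) where
  Φ : Set (V n)
  pos : Set (V n)
  simple : Fin n → V n
  highest : V n
  finite : Φ.Finite
  nonzero : ∀ α ∈ Φ, α ≠ 0
  neg_mem : ∀ α ∈ Φ, -α ∈ Φ
  span_top : Submodule.span ℝ Φ = ⊤
  reflect_mem : ∀ α ∈ Φ, ∀ β ∈ Φ, β - (2 * ⟪α, β⟫ / ⟪α, α⟫) • α ∈ Φ
  crystallographic : ∀ α ∈ Φ, ∀ β ∈ Φ, ∃ m : ℤ, 2 * ⟪α, β⟫ / ⟪α, α⟫ = (m : ℝ)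
  reduced : ∀ α ∈ Φ, ∀ c : ℝ, c • α ∈ Φ → c = 1 ∨ c = -1
  pos_sub : pos ⊆ Φ
  pos_total : ∀ α ∈ Φ, α ∈ pos ∨ -α ∈ pos
  pos_not_neg : ∀ α ∈ pos, -α ∉ pos
  simple_mem : ∀ i, simple i ∈ pos
  simple_indep : LinearIndependent ℝ simple
  pos_combo : ∀ α ∈ pos, ∃ c : Fin n → ℝ, (∀ i, 0 ≤ c i) ∧ α = ∑ i, c i • simple i
  highest_mem : highest ∈ pos
  highest_dominates : ∀ α ∈ pos, ∃ c : Fin n → ℝ, (∀ i, 0 ≤ c i) ∧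
    highest - α = ∑ i, c i • simple i
  irreducible : ∀ A B : Set (Fin n), A ∪ B = Set.univ → A ∩ B = ∅ →
    (∀ i ∈ A, ∀ j ∈ B, ⟪simple i, simple j⟫ = 0) → A = ∅ ∨ B = ∅

variable {n : ℕ}

/-- The coroot `α^∨ = 2α/⟨α,α⟩`. -/
def coroot (α : V n) : V n := (2 / ⟪α, α⟫) • α

/-- The affine hyperplane `H_{α,k} = {v : ⟨α,v⟩ = k}`. -/
def Hy (α : V n) (k : ℝ) : Set (V n) := {v | ⟪α, v⟫ = k}

/-- The closed half-space `{v : ⟨α,v⟩ ≥ k}`. -/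
def Hge (α : V n) (k : ℝ) : Set (V n) := {v | k ≤ ⟪α, v⟫}

/-- The closed half-space `{v : ⟨α,v⟩ ≤ k}`. -/
def Hle (α : V n) (k : ℝ) : Set (V n) := {v | ⟪α, v⟫ ≤ k}

/-- The affine reflection `s_{α,k}` fixing `H_{α,k}` pointwise. -/
def sRefl (α : V n) (k : ℝ) : V n → V n := fun v => v - (⟪α, v⟫ - k) • coroot α

/-- The coroot lattice `R^∨ = ⊕ᵢ ℤ αᵢ^∨`. -/
def corootLattice (D : RootData n) : Set (V n) :=
  {μ | ∃ c : Fin n → ℤ, μ = ∑ i, (c i : ℝ) • coroot (D.simple i)}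

/-- The affine Weyl group `W`, as the group of permutations of `V` generated by all
affine reflections `s_{α,k}` with `α ∈ Φ`, `k ∈ ℤ`. -/
def AffW (D : RootData n) : Subgroup (Equiv.Perm (V n)) :=
  Subgroup.closure {e : Equiv.Perm (V n) | ∃ α ∈ D.Φ, ∃ k : ℤ, ⇑e = sRefl α (k : ℝ)}

/-- The finite Weyl group `W₀`, generated by the linear reflections `s_{α,0}`. -/
def FinW (D : RootData n) : Subgroup (Equiv.Perm (V n)) :=
  Subgroup.closure {e : Equiv.Perm (V n) | ∃ α ∈ D.Φ, ⇑e = sRefl α 0}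

/-- The Coxeter generating set `S = {s₀, s₁, …, sₙ}` of the affine Weyl group. -/
def SGen (D : RootData n) : Set (AffW D) :=
  {s | ⇑(s : Equiv.Perm (V n)) = sRefl D.highest 1 ∨
       ∃ i : Fin n, ⇑(s : Equiv.Perm (V n)) = sRefl (D.simple i) 0}

/-- The Coxeter length of `y ∈ W` with respect to `S`. -/
def lenW (D : RootData n) (y : AffW D) : ℕ :=
  sInf {m | ∃ l : List (AffW D), (∀ s ∈ l, s ∈ SGen D) ∧ l.length = m ∧ l.prod = y}

/-- The fundamental alcove `𝐚_f`. -/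
def fund (D : RootData n) : Set (V n) :=
  {v | (∀ i, 0 ≤ ⟪D.simple i, v⟫) ∧ ⟪D.highest, v⟫ ≤ 1}

/-- The union of all the hyperplanes `H_{α,k}`. -/
def wallUnion (D : RootData n) : Set (V n) := ⋃ α ∈ D.Φ, ⋃ k : ℤ, Hy α (k : ℝ)

/-- An alcove: the closure of a connected component of the complement of all walls. -/
def IsAlcove (D : RootData n) (c : Set (V n)) : Prop :=
  ∃ v ∈ (wallUnion D)ᶜ, c = closure (connectedComponentIn (wallUnion D)ᶜ v)

/-- A (closed) face of the Coxeter complex: the closure of an equivalence class of points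
having the same position relative to every hyperplane of the arrangement. -/
def IsFace (D : RootData n) (F : Set (V n)) : Prop :=
  ∃ v : V n, F = closure {w | ∀ α ∈ D.Φ, ∀ k : ℤ,
    (⟪α, w⟫ = (k : ℝ) ↔ ⟪α, v⟫ = (k : ℝ)) ∧ (⟪α, w⟫ < (k : ℝ) ↔ ⟪α, v⟫ < (k : ℝ))}

/-- The set of all hyperplanes of the affine arrangement, as subsets of `V`. -/
def hyperplanes (D : RootData n) : Set (Set (V n)) :=
  {H | ∃ α ∈ D.Φ, ∃ k : ℤ, H = Hy α (k : ℝ)}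

/-- `p` is a panel (codimension-one face) of the alcove `c`: it is the intersection of `c`
with a wall, and it lies in exactly one hyperplane (its supporting hyperplane). -/
def IsPanelOf (D : RootData n) (p c : Set (V n)) : Prop :=
  IsAlcove D c ∧ IsFace D p ∧ (∃ H ∈ hyperplanes D, p = c ∩ H) ∧
    ∃! H, H ∈ hyperplanes D ∧ p ⊆ H

/-- The action of an element of the affine Weyl group on subsets of `V`. -/
def actW {D : RootData n} (x : AffW D) (A : Set (V n)) : Set (V n) :=
  ⇑(x : Equiv.Perm (V n)) '' A

/-- The data of a finite combinatorial gallery `(p₀, c₀, p₁, …, p_l, c_l, p_{l+1})`: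
`len = l`, alcoves `c 0, …, c len` and faces `p 0, …, p (len+1)`. -/
structure PreGallery (n : ℕ) where
  len : ℕ
  p : ℕ → Set (V n)
  c : ℕ → Set (V n)

/-- The gallery conditions for the data of a combinatorial gallery. -/
def IsGallery (D : RootData n) (γ : PreGallery n) : Prop :=
  (∀ i ≤ γ.len, IsAlcove D (γ.c i)) ∧
  (IsFace D (γ.p 0) ∧ γ.p 0 ⊆ γ.c 0) ∧
  (IsFace D (γ.p (γ.len + 1)) ∧ γ.p (γ.len + 1) ⊆ γ.c γ.len) ∧
  ∀ i, 1 ≤ i → i ≤ γ.len → IsPanelOf D (γ.p i) (γ.c (i - 1)) ∧ IsPanelOf D (γ.p i) (γ.c i)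

/-- A gallery is positively folded with respect to an orientation `φ` if whenever it has a
fold at `pᵢ` (i.e. `c_{i-1} = c_i`), `φ(cᵢ, pᵢ) = +`. -/
def PositivelyFolded (φ : Set (V n) → Set (V n) → Prop) (γ : PreGallery n) : Prop :=
  ∀ i, 1 ≤ i → i ≤ γ.len → γ.c (i - 1) = γ.c i → φ (γ.c i) (γ.p i)

/-- `X` and `Y` lie in a common closed half-space bounded by `H_{α,k}`. -/
def sameSide (α : V n) (k : ℝ) (X Y : Set (V n)) : Prop :=
  (X ⊆ Hge α k ∧ Y ⊆ Hge α k) ∨ (X ⊆ Hle α k ∧ Y ⊆ Hle α k)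

/-- The hyperplane `H_{α,k}` separates `X` from `Y` (they lie in opposite closed
half-spaces). -/
def Separates (α : V n) (k : ℝ) (X Y : Set (V n)) : Prop :=
  (X ⊆ Hge α k ∧ Y ⊆ Hle α k) ∨ (X ⊆ Hle α k ∧ Y ⊆ Hge α k)

/-- The orientation induced by an alcove `A`: `φ(c,p) = +` iff the closed half-space bounded
by the supporting hyperplane of `p` which contains `c` does not contain `A`. -/
def alcoveOrient (D : RootData n) (A : Set (V n)) : Set (V n) → Set (V n) → Prop :=
  fun c p => ∀ α ∈ D.Φ, ∀ k : ℤ, p ⊆ Hy α (k : ℝ) → ¬ sameSide α (k : ℝ) c A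

/-- Two faces have the same type iff they lie in the same orbit of the affine Weyl group. -/
def SameTypeFace (D : RootData n) (σ σ' : Set (V n)) : Prop :=
  ∃ x : Equiv.Perm (V n), x ∈ AffW D ∧ σ' = ⇑x '' σ

/-- Two galleries have the same type iff they have the same length and corresponding
faces (first face, panels, last face) have the same types. -/
def SameTypeGallery (D : RootData n) (γ γ' : PreGallery n) : Prop :=
  γ.len = γ'.len ∧ ∀ i ≤ γ.len + 1, SameTypeFace D (γ.p i) (γ'.p i)

/-- A gallery is minimal if it has minimal length among all galleries with the same first
and last faces. -/
def IsMinimal (D : RootData n) (γ : PreGallery n) : Prop :=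
  IsGallery D γ ∧ ∀ γ' : PreGallery n, IsGallery D γ' → γ'.p 0 = γ.p 0 →
    γ'.p (γ'.len + 1) = γ.p (γ.len + 1) → γ.len ≤ γ'.len

/-- The shadow with respect to the orientation `φ`, relative to a fixed (minimal) gallery
`γ`: the set of final simplices of all galleries of the same type as `γ`, with the same
first face, which are positively folded with respect to `φ`. -/
def Shadow (D : RootData n) (φ : Set (V n) → Set (V n) → Prop) (γ : PreGallery n) :
    Set (Set (V n)) :=
  {ζ | ∃ γ' : PreGallery n, IsGallery D γ' ∧ SameTypeGallery D γ γ' ∧ γ'.p 0 = γ.p 0 ∧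
    PositivelyFolded φ γ' ∧ ζ = γ'.p (γ'.len + 1)}

/-- The vertex version of the shadow: the set of points `μ` whose corresponding vertex
(the singleton face `{μ}`) is a final simplex of a positively folded gallery of the
appropriate type. -/
def VShadow (D : RootData n) (φ : Set (V n) → Set (V n) → Prop) (γ : PreGallery n) :
    Set (V n) :=
  {μ | ({μ} : Set (V n)) ∈ Shadow D φ γ}

/-- The orbit `W₀ · λ` of a point under the finite Weyl group. -/
def W0orbit (D : RootData n) (lam : V n) : Set (V n) :=
  {v | ∃ w ∈ FinW D, v = w lam}

/-- The closed half-space bounded by `H_{α,k}` which contains the fundamental alcove. -/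
def HalfId (D : RootData n) (α : V n) (k : ℝ) : Set (V n) :=
  if fund D ⊆ Hge α k then Hge α k else Hle α k

/-- `[j,m]` is a (finite) `H_{α,k}`-protrusion of `γ`. -/
def IsProtrusionFin (D : RootData n) (γ : PreGallery n) (α : V n) (k : ℝ) (j m : ℕ) : Prop :=
  j < m ∧ m ≤ γ.len + 1 ∧ γ.p j ⊆ Hy α k ∧ γ.p m ⊆ Hy α k ∧
    ∀ i, j ≤ i → i < m → ¬ γ.c i ⊆ HalfId D α k

/-- `[j,∞)` is an (infinite) `H_{α,k}`-protrusion of `γ`. -/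
def IsProtrusionInf (D : RootData n) (γ : PreGallery n) (α : V n) (k : ℝ) (j : ℕ) : Prop :=
  j ≤ γ.len + 1 ∧ γ.p j ⊆ Hy α k ∧ ∀ i, j ≤ i → i ≤ γ.len → ¬ γ.c i ⊆ HalfId D α k

/-- The set of indices reflected by the maximal `H`-outcrop: the union of (the index sets
of) all `H`-protrusions. -/
def maxOutcrop (D : RootData n) (γ : PreGallery n) (α : V n) (k : ℝ) : Set ℕ :=
  {i | (∃ j m, IsProtrusionFin D γ α k j m ∧ j ≤ i ∧ i < m) ∨
       (∃ j, IsProtrusionInf D γ α k j ∧ j ≤ i)}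

/-- `[j,m]` is a (finite) `H_{α,k}`-indentation of `γ`. -/
def IsIndentationFin (D : RootData n) (γ : PreGallery n) (α : V n) (k : ℝ) (j m : ℕ) : Prop :=
  1 ≤ j ∧ j < m ∧ m ≤ γ.len + 1 ∧ γ.p j ⊆ Hy α k ∧ γ.p m ⊆ Hy α k ∧
    ∀ i, j ≤ i → i < m → γ.c i ⊆ HalfId D α k

/-- `[j,∞)` is an (infinite) `H_{α,k}`-indentation of `γ`. -/
def IsIndentationInf (D : RootData n) (γ : PreGallery n) (α : V n) (k : ℝ) (j : ℕ) : Prop :=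
  1 ≤ j ∧ j ≤ γ.len + 1 ∧ γ.p j ⊆ Hy α k ∧ ∀ i, j ≤ i → i ≤ γ.len → γ.c i ⊆ HalfId D α k

/-- The set of indices reflected by the maximal `H`-ingrowth: the union of (the index sets
of) all `H`-indentations. -/
def maxIngrowth (D : RootData n) (γ : PreGallery n) (α : V n) (k : ℝ) : Set ℕ :=
  {i | (∃ j m, IsIndentationFin D γ α k j m ∧ j ≤ i ∧ i < m) ∨
       (∃ j, IsIndentationInf D γ α k j ∧ j ≤ i)}

/-- The operators `e_H^L` and `f_H^L`: reflect in `H_{α,k}` those alcoves (and the faces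
in between) whose indices belong to `L`.  (Since the bounding faces of a protrusion or
indentation lie in `H`, they are fixed pointwise by the reflection, so this uniform
description agrees with the usual one.) -/
def flipGallery (α : V n) (k : ℝ) (L : Set ℕ) (γ : PreGallery n) : PreGallery n :=
  ⟨γ.len,
   fun i => if i ∈ L then sRefl α k '' γ.p i else γ.p i,
   fun i => if i ∈ L then sRefl α k '' γ.c i else γ.c i⟩

/-- `P` is the index set of a single `H`-protrusion. -/
def IsFlipProtrusion (D : RootData n) (γ : PreGallery n) (α : V n) (k : ℝ) (P : Set ℕ) :
    Prop :=
  (∃ j m, IsProtrusionFin D γ α k j m ∧ P = Set.Ico j m) ∨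
  (∃ j, IsProtrusionInf D γ α k j ∧ P = Set.Ici j)

/-- `P` is the index set of a single `H`-indentation. -/
def IsFlipIndentation (D : RootData n) (γ : PreGallery n) (α : V n) (k : ℝ) (P : Set ℕ) :
    Prop :=
  (∃ j m, IsIndentationFin D γ α k j m ∧ P = Set.Ico j m) ∨
  (∃ j, IsIndentationInf D γ α k j ∧ P = Set.Ici j)

/-- `L` is an `H`-outcrop: a disjoint union of `H`-protrusions. -/
def IsOutcrop (D : RootData n) (γ : PreGallery n) (α : V n) (k : ℝ) (L : Set ℕ) : Prop :=
  ∃ C : Set (Set ℕ), (∀ P ∈ C, IsFlipProtrusion D γ α k P) ∧ C.Pairwise Disjoint ∧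
    L = ⋃₀ C

/-- `L` is an `H`-ingrowth: a disjoint union of `H`-indentations. -/
def IsIngrowth (D : RootData n) (γ : PreGallery n) (α : V n) (k : ℝ) (L : Set ℕ) : Prop :=
  ∃ C : Set (Set ℕ), (∀ P ∈ C, IsFlipIndentation D γ α k P) ∧ C.Pairwise Disjoint ∧
    L = ⋃₀ C

/-- The dominant Weyl chamber `C_f`. -/
def Cf (D : RootData n) : Set (V n) := {v | ∀ α ∈ D.pos, 0 ≤ ⟪α, v⟫}

/-- The closed half-space `α^{k,w}` bounded by `H_{α,k}` which contains a subsector of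
the Weyl chamber `w·C_f`. -/
def halfFor (D : RootData n) (α : V n) (k : ℝ) (w : Equiv.Perm (V n)) : Set (V n) :=
  if ∀ v ∈ Cf D, 0 ≤ ⟪α, w v⟫ then Hge α k else Hle α k

/-- The sub-root system `Φ_J` spanned by the simple roots indexed by `J`. -/
def PhiJ (D : RootData n) (J : Set (Fin n)) : Set (V n) :=
  {α | α ∈ D.Φ ∧ α ∈ Submodule.span ℝ (D.simple '' J)}

/-- The positive roots `Φ_J⁺` of the sub-root system `Φ_J`. -/
def PhiJpos (D : RootData n) (J : Set (Fin n)) : Set (V n) := D.pos ∩ PhiJ D J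

/-- `w0` is the longest element of the finite Weyl group: it maps the dominant Weyl chamber
to the antidominant one. -/
def IsLongest (D : RootData n) (w0 : Equiv.Perm (V n)) : Prop :=
  w0 ∈ FinW D ∧ ⇑w0 '' Cf D = {v | -v ∈ Cf D}

/-- The `J`-chimney `ξ_J`, a collection of closed half-spaces. -/
def chimney (D : RootData n) (J : Set (Fin n)) (w0 : Equiv.Perm (V n)) : Set (Set (V n)) :=
  {h | ∃ α ∈ PhiJpos D J, ∃ k : ℤ, k ≤ 0 ∧ h = halfFor D α (k : ℝ) 1} ∪
  {h | ∃ α ∈ PhiJpos D J, ∃ k : ℤ, 1 ≤ k ∧ h = halfFor D α (k : ℝ) w0} ∪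
  {h | ∃ β ∈ D.pos \ PhiJpos D J, ∃ k : ℤ, h = halfFor D β (k : ℝ) w0}

/-- The `(J,y)`-chimney `ξ_{J,y} = y · ξ_J`. -/
def chimneyY (D : RootData n) (J : Set (Fin n)) (w0 : Equiv.Perm (V n)) (y : AffW D) :
    Set (Set (V n)) :=
  {h | ∃ h' ∈ chimney D J w0, h = actW y h'}

/-- The orientation `φ_{J,y}` induced by the `(J,y)`-chimney: `φ(c,p) = +` iff the closed
half-space bounded by the supporting hyperplane of `p` which contains `c` is not an
element of `ξ_{J,y}`. -/
def chimneyOrient (D : RootData n) (J : Set (Fin n)) (w0 : Equiv.Perm (V n)) (y : AffW D) :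
    Set (V n) → Set (V n) → Prop :=
  fun c p => ∀ α ∈ D.Φ, ∀ k : ℤ, p ⊆ Hy α (k : ℝ) →
    ¬ ((c ⊆ Hge α (k : ℝ) ∧ Hge α (k : ℝ) ∈ chimneyY D J w0 y) ∨
       (c ⊆ Hle α (k : ℝ) ∧ Hle α (k : ℝ) ∈ chimneyY D J w0 y))

/-- The `J`-sector determined by integers `n_β`, `β ∈ Φ⁺ ∖ Φ_J⁺`. -/
def sectorJ (D : RootData n) (J : Set (Fin n)) (w0 : Equiv.Perm (V n)) (nb : V n → ℤ) :
    Set (V n) :=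
  (⋂ α ∈ PhiJpos D J, halfFor D α 0 1 ∩ halfFor D α 1 w0) ∩
  ⋂ β ∈ D.pos \ PhiJpos D J, halfFor D β (nb β : ℝ) w0

/-- The `(J,y)`-sector `y · S_J({n_β})`. -/
def sectorJY (D : RootData n) (J : Set (Fin n)) (w0 : Equiv.Perm (V n)) (y : AffW D)
    (nb : V n → ℤ) : Set (V n) :=
  actW y (sectorJ D J w0 nb)

/-- The data of an infinite combinatorial gallery `(p₀, c₀, p₁, c₁, …)`. -/
structure InfPreGallery (n : ℕ) where
  p : ℕ → Set (V n)
  c : ℕ → Set (V n)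

/-- The gallery conditions for an infinite combinatorial gallery. -/
def IsInfGallery (D : RootData n) (Γ : InfPreGallery n) : Prop :=
  (∀ i, IsAlcove D (Γ.c i)) ∧ IsFace D (Γ.p 0) ∧ Γ.p 0 ⊆ Γ.c 0 ∧
    ∀ i, 1 ≤ i → IsPanelOf D (Γ.p i) (Γ.c (i - 1)) ∧ IsPanelOf D (Γ.p i) (Γ.c i)

/-- The initial finite subgallery `(p₀, c₀, …, p_{m+1})` of an infinite gallery. -/
def truncGallery (Γ : InfPreGallery n) (m : ℕ) : PreGallery n := ⟨m, Γ.p, Γ.c⟩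

/-- An infinite gallery is minimal if every initial finite subgallery is minimal. -/
def InfMinimal (D : RootData n) (Γ : InfPreGallery n) : Prop :=
  ∀ m : ℕ, IsMinimal D (truncGallery Γ m)

/-- Regularity of a (minimal infinite) gallery with respect to the `(J,y)`-sector, where
`y = t^μ u`. -/
def RegularWrt (D : RootData n) (J : Set (Fin n)) (w0 u : Equiv.Perm (V n)) (μ : V n)
    (nb : V n → ℤ) (Γ : InfPreGallery n) : Prop :=
  ∀ β ∈ D.pos \ PhiJpos D J, ∀ k : ℤ,
    halfFor D (u β) (k : ℝ) (u * w0) ⊆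
      halfFor D (u β) ((nb β : ℝ) + ⟪u β, μ⟫) (u * w0) →
    ∃ i, Γ.c i ⊆ halfFor D (u β) (k : ℝ) (u * w0)

/-- The panel of the fundamental alcove fixed by the generator `s ∈ S` (determining the
type of a panel). -/
def fixedPanelType {D : RootData n} (s : AffW D) : Set (V n) :=
  fund D ∩ {v | (s : Equiv.Perm (V n)) v = v}

/-- `γ` has type `(type(σ0), s_{j₁}, …, s_{j_l}, type(τ))` where the `s_{jᵢ}` are the
entries of the word `l`. -/
def HasWordType (D : RootData n) (γ : PreGallery n) (σ0 : Set (V n)) (l : List (AffW D))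
    (τ : Set (V n)) : Prop :=
  γ.len = l.length ∧ SameTypeFace D σ0 (γ.p 0) ∧ SameTypeFace D τ (γ.p (γ.len + 1)) ∧
    ∀ i, ∀ h : i < l.length, SameTypeFace D (fixedPanelType (l.get ⟨i, h⟩)) (γ.p (i + 1))

/-- `l` is a reduced word for `w ∈ W`. -/
def IsReducedWord (D : RootData n) (l : List (AffW D)) (w : AffW D) : Prop :=
  (∀ s ∈ l, s ∈ SGen D) ∧ l.prod = w ∧ l.length = lenW D w

end

/-!
Alcoves are the closed boxes `{w | ⌊⟪α, v⟫⌋ ≤ ⟪α, w⟫ ≤ ⌊⟪α, v⟫⌋ + 1 for all α ∈ Φ}` around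
points `v` off the walls. Take a ray `t ↦ x + t • d` in `S_J({n_β})` with `⟪α, d⟫ = 0` on `Φ_J⁺`
and `⟪β, d⟫ < 0` on `Φ⁺ ∖ Φ_J⁺`, generic in the sense that it meets the walls one at a time (a
Baire category argument). The boxes it passes through, glued along the panels where it crosses a
wall, form an infinite gallery. The gallery is minimal: a gallery between the same faces has to
cross every wall separating them, and the ray crosses each wall only once. It is regular because
`⟪β, ·⟫ → -∞` along the ray for `β ∉ Φ_J`. The map `y = t^μ u` permutes walls and boxes (`u` is
an isometry preserving `Φ`, and `⟪α, μ⟫ ∈ ℤ`), so it carries all of this into `S_{J,y}`. If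
`Φ⁺ = Φ_J⁺` the sector is a single alcove.
-/

open Set Filter Topology

variable {n : ℕ}

lemma subset_Ioo_floor_of_isPreconnected {s : Set ℝ} (hs : IsPreconnected s)
    (hint : ∀ q : ℤ, (q : ℝ) ∉ s) {a : ℝ} (ha : a ∈ s) :
    s ⊆ Ioo (⌊a⌋ : ℝ) (⌊a⌋ + 1) := by
  intro b hb
  constructor
  · by_contra! h
    exact hint ⌊a⌋ (hs.Icc_subset hb ha ⟨h, Int.floor_le a⟩)
  · by_contra! h
    refine hint (⌊a⌋ + 1) (hs.Icc_subset ha hb ⟨?_, by push_cast; exact h⟩)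
    push_cast
    exact (Int.lt_floor_add_one a).le

lemma mem_Icc_floor_of_continuous {f : ℝ → ℝ} (hf : Continuous f) {a b s t : ℝ}
    (hint : ∀ r ∈ Ioo a b, ∀ q : ℤ, f r ≠ q) (hs : s ∈ Ioo a b) (ht : t ∈ Icc a b) :
    f t ∈ Icc (⌊f s⌋ : ℝ) (⌊f s⌋ + 1) := by
  have hsub : f '' Ioo a b ⊆ Ioo (⌊f s⌋ : ℝ) (⌊f s⌋ + 1) :=
    subset_Ioo_floor_of_isPreconnected (isPreconnected_Ioo.image f hf.continuousOn)
      (by rintro q ⟨r, hr, hrq⟩; exact hint r hr q hrq) (mem_image_of_mem f hs)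
  have ht' : t ∈ closure (Ioo a b) := by rwa [closure_Ioo (hs.1.trans hs.2).ne]
  have := closure_mono hsub (image_closure_subset_closure_image hf (mem_image_of_mem f ht'))
  rwa [closure_Ioo (lt_add_one _).ne] at this

lemma mem_Icc_of_forall_int_iff {x y : ℝ} {m : ℤ}
    (h : ∀ k : ℤ, (x = k ↔ y = k) ∧ (x < k ↔ y < k)) (hy : y ∈ Icc (m : ℝ) (m + 1)) :
    x ∈ Icc (m : ℝ) (m + 1) := by
  have hm1 := h (m + 1)
  push_cast at hm1
  refine ⟨not_lt.1 fun hx => hy.1.not_gt ((h m).2.1 hx), ?_⟩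
  rcases hy.2.lt_or_eq with hlt | heq
  exacts [(hm1.2.2 hlt).le, (hm1.1.2 heq).le]

lemma forall_int_iff_of_mem_Ioo {x y : ℝ} {m : ℤ} (hx : x ∈ Ioo (m : ℝ) (m + 1))
    (hy : y ∈ Ioo (m : ℝ) (m + 1)) : ∀ k : ℤ, (x = k ↔ y = k) ∧ (x < k ↔ y < k) := by
  intro k
  rcases le_or_gt k m with hk | hk
  · have : (k : ℝ) ≤ m := by exact_mod_cast hk
    exact ⟨⟨fun h => by linarith [hx.1], fun h => by linarith [hy.1]⟩,
      ⟨fun h => by linarith [hx.1], fun h => by linarith [hy.1]⟩⟩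
  · have : (m : ℝ) + 1 ≤ k := by exact_mod_cast hk
    exact ⟨⟨fun h => by linarith [hx.2], fun h => by linarith [hy.2]⟩,
      ⟨fun _ => by linarith [hy.2], fun _ => by linarith [hx.2]⟩⟩

lemma mul_add_mul_mem_Ioo {lo hi r s a b : ℝ} (hr : r ∈ Icc lo hi) (hs : s ∈ Ioo lo hi) (ha : 0 < a)
    (hb : 0 < b) (hab : a + b = 1) : a * r + b * s ∈ Ioo lo hi := by
  have hlo : lo = a * lo + b * lo := by rw [← add_mul, hab, one_mul]
  have hhi : hi = a * hi + b * hi := by rw [← add_mul, hab, one_mul]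
  constructor
  · rw [hlo]
    exact add_lt_add_of_le_of_lt (by gcongr; exact hr.1) (by gcongr; exact hs.1)
  · rw [hhi]
    exact add_lt_add_of_le_of_lt (by gcongr; exact hr.2) (by gcongr; exact hs.2)

lemma finite_setOf_add_mul_eq_int {c e : ℝ} (he : e ≠ 0) (a b : ℝ) :
    {t ∈ Icc a b | ∃ q : ℤ, c + t * e = q}.Finite := by
  set K := |c| + (|a| + |b|) * |e|
  refine Finite.of_finite_image (f := fun t => c + t * e) ?_
    fun t _ t' _ h => mul_right_cancel₀ he (add_left_cancel h)
  refine ((finite_Icc (-⌈K⌉) ⌈K⌉).image (Int.cast : ℤ → ℝ)).subset ?_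
  rintro _ ⟨t, ⟨hab, q, hq⟩, rfl⟩
  have ht : |t| ≤ |a| + |b| := abs_le.2 ⟨by linarith [neg_abs_le a, abs_nonneg b, hab.1],
    by linarith [le_abs_self b, abs_nonneg a, hab.2]⟩
  have hqK : |(q : ℝ)| ≤ ⌈K⌉ := by
    calc |(q : ℝ)| = |c + t * e| := by rw [hq]
      _ ≤ |c| + |t| * |e| := (abs_add_le _ _).trans_eq (by rw [abs_mul])
      _ ≤ |c| + (|a| + |b|) * |e| := by gcongr
      _ ≤ ⌈K⌉ := Int.le_ceil K
  rw [← Int.cast_abs, Int.cast_le, abs_le] at hqK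
  exact ⟨q, hqK, hq.symm⟩

theorem exists_strictMono_enum {S : Set ℝ} (hfin : ∀ a b, (S ∩ Icc a b).Finite)
    (hunb : ∀ a, ∃ t ∈ S, a < t) :
    ∃ τ : ℕ → ℝ, τ 0 = 0 ∧ StrictMono τ ∧ (∀ i, τ (i + 1) ∈ S) ∧
      (∀ i, ∀ t ∈ S, τ i < t → τ (i + 1) ≤ t) ∧ Tendsto τ atTop atTop := by
  have hnext : ∀ a, ∃ t, IsLeast (S ∩ Ioi a) t := by
    intro a
    obtain ⟨b, hbS, hab⟩ := hunb a
    obtain ⟨t, ⟨htS, hat, htb⟩, hmin⟩ := (S ∩ Ioc a b).exists_min_image id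
      ((hfin a b).subset (inter_subset_inter_right _ Ioc_subset_Icc_self)) ⟨b, hbS, hab, le_rfl⟩
    refine ⟨t, ⟨htS, hat⟩, fun t' ⟨ht'S, ht'a⟩ => ?_⟩
    rcases le_or_gt t' b with h | h
    exacts [hmin t' ⟨ht'S, ht'a, h⟩, htb.trans h.le]
  choose next hnext using hnext
  have hsucc (i : ℕ) : next^[i + 1] 0 = next (next^[i] 0) := Function.iterate_succ_apply' ..
  have hmono : StrictMono fun i => next^[i] 0 :=
    strictMono_nat_of_lt_succ fun i => by rw [hsucc]; exact (hnext _).1.2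
  have hmem (i : ℕ) : next^[i + 1] 0 ∈ S := by rw [hsucc]; exact (hnext _).1.1
  refine ⟨fun i => next^[i] 0, rfl, hmono, hmem,
    fun i t ht hlt => by simp only [hsucc]; exact (hnext _).2 ⟨ht, hlt⟩,
    tendsto_atTop_atTop_of_monotone hmono.monotone fun X => ?_⟩
  by_contra! hX
  refine infinite_range_of_injective (hmono.injective.comp (add_left_injective 1))
    ((hfin 0 X).subset (range_subset_iff.2 fun i => ⟨hmem i, ?_, (hX _).le⟩))
  exact hmono.monotone (Nat.zero_le _)

namespace RootData

variable (D : RootData n) {α v w z : V n}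

def wallRoots (v : V n) : Set (V n) := {α ∈ D.Φ | ∃ q : ℤ, ⟪α, v⟫ = q}

def openBox (v : V n) : Set (V n) :=
  {w | ∀ α ∈ D.Φ, ⟪α, w⟫ ∈ Ioo (⌊⟪α, v⟫⌋ : ℝ) (⌊⟪α, v⟫⌋ + 1)}

def closedBox (v : V n) : Set (V n) :=
  {w | ∀ α ∈ D.Φ, ⟪α, w⟫ ∈ Icc (⌊⟪α, v⟫⌋ : ℝ) (⌊⟪α, v⟫⌋ + 1)}

def cell (v : V n) : Set (V n) :=
  {w | ∀ α ∈ D.Φ, ∀ k : ℤ, (⟪α, w⟫ = k ↔ ⟪α, v⟫ = k) ∧ (⟪α, w⟫ < k ↔ ⟪α, v⟫ < k)}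

lemma mem_wallUnion_iff : v ∈ wallUnion D ↔ (D.wallRoots v).Nonempty := by
  simp [wallUnion, wallRoots, Hy, Set.Nonempty]

lemma notMem_wallUnion_iff : v ∉ wallUnion D ↔ ∀ α ∈ D.Φ, ∀ q : ℤ, ⟪α, v⟫ ≠ q := by
  simp [wallUnion, Hy]

lemma neg_mem_wallRoots (hα : α ∈ D.wallRoots v) : -α ∈ D.wallRoots v := by
  obtain ⟨hαΦ, q, hq⟩ := hα
  exact ⟨D.neg_mem α hαΦ, -q, by rw [inner_neg_left, hq, Int.cast_neg]⟩

lemma inner_mem_Ioo_floor (hv : v ∉ wallUnion D) (hα : α ∈ D.Φ) :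
    ⟪α, v⟫ ∈ Ioo (⌊⟪α, v⟫⌋ : ℝ) (⌊⟪α, v⟫⌋ + 1) :=
  ⟨(Int.floor_le _).lt_of_ne ((D.notMem_wallUnion_iff.1 hv) α hα _).symm, Int.lt_floor_add_one _⟩

lemma mem_closedBox_self (v : V n) : v ∈ D.closedBox v :=
  fun _ _ => ⟨Int.floor_le _, (Int.lt_floor_add_one _).le⟩

lemma closedBox_congr (h : ∀ α ∈ D.Φ, ⌊⟪α, v⟫⌋ = ⌊⟪α, w⟫⌋) : D.closedBox v = D.closedBox w :=
  Set.ext fun _ => forall₂_congr fun α hα => by rw [h α hα]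

lemma isClosed_closedBox (v : V n) : IsClosed (D.closedBox v) := by
  simp only [closedBox, ofPred_forall]
  exact isClosed_biInter fun α _ => isClosed_Icc.preimage (continuous_const.inner continuous_id)

lemma convex_openBox (v : V n) : Convex ℝ (D.openBox v) := by
  simp only [openBox, ofPred_forall]
  exact convex_iInter₂ fun α _ => (convex_Ioo _ _).linear_preimage (innerₛₗ ℝ α)

lemma openBox_subset_compl (v : V n) : D.openBox v ⊆ (wallUnion D)ᶜ := by
  refine fun w hw => D.notMem_wallUnion_iff.2 fun α hα q hq => ?_
  obtain ⟨h1, h2⟩ := hw α hα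
  rw [hq] at h1 h2
  have : ⌊⟪α, v⟫⌋ < q ∧ q < ⌊⟪α, v⟫⌋ + 1 := ⟨by exact_mod_cast h1, by exact_mod_cast h2⟩
  omega

lemma connectedComponentIn_eq_openBox (hv : v ∉ wallUnion D) :
    connectedComponentIn (wallUnion D)ᶜ v = D.openBox v := by
  refine Subset.antisymm (fun w hw α hα => ?_)
    ((D.convex_openBox v).isPreconnected.subset_connectedComponentIn
      (fun α hα => D.inner_mem_Ioo_floor hv hα) (D.openBox_subset_compl v))
  refine subset_Ioo_floor_of_isPreconnected (isPreconnected_connectedComponentIn.image _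
    (continuous_const.inner continuous_id).continuousOn) ?_
    (mem_image_of_mem _ (mem_connectedComponentIn hv)) (mem_image_of_mem _ hw)
  rintro q ⟨z, hz, hzq⟩
  exact D.notMem_wallUnion_iff.1 (connectedComponentIn_subset _ _ hz) α hα q hzq

lemma openSegment_subset_openBox (hv : v ∉ wallUnion D) (hw : w ∈ D.closedBox v) :
    openSegment ℝ w v ⊆ D.openBox v := by
  rintro _ ⟨a, b, ha, hb, hab, rfl⟩ α hα
  simp only [inner_add_right, real_inner_smul_right]
  exact mul_add_mul_mem_Ioo (hw α hα) (D.inner_mem_Ioo_floor hv hα) ha hb hab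

lemma closure_openBox (hv : v ∉ wallUnion D) : closure (D.openBox v) = D.closedBox v :=
  Subset.antisymm
    (closure_minimal (fun _ hw α hα => Ioo_subset_Icc_self (hw α hα)) (D.isClosed_closedBox v))
    fun w hw => closure_mono (D.openSegment_subset_openBox hv hw)
      (segment_subset_closure_openSegment (left_mem_segment ℝ w v))

lemma isAlcove_iff {c : Set (V n)} : IsAlcove D c ↔ ∃ v ∉ wallUnion D, c = D.closedBox v :=
  exists_congr fun _ => and_congr_right fun hv => by
    rw [D.connectedComponentIn_eq_openBox hv, D.closure_openBox hv]

lemma closedBox_subset_Hle (hα : α ∈ D.Φ) {q : ℤ} (h : ⟪α, v⟫ < q) : D.closedBox v ⊆ Hle α q :=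
  fun w hw => (hw α hα).2.trans (by exact_mod_cast Int.floor_lt.2 h)

lemma closedBox_subset_Hge (hα : α ∈ D.Φ) {q : ℤ} (h : (q : ℝ) ≤ ⟪α, v⟫) :
    D.closedBox v ⊆ Hge α q :=
  fun w hw => le_trans (by exact_mod_cast Int.le_floor.2 h) (hw α hα).1

lemma isFace_closure_cell (v : V n) : IsFace D (closure (D.cell v)) := ⟨v, rfl⟩

lemma mem_cell_self (v : V n) : v ∈ D.cell v := fun _ _ _ => ⟨Iff.rfl, Iff.rfl⟩

lemma closure_cell_subset_closedBox (hz : z ∈ D.closedBox v) :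
    closure (D.cell z) ⊆ D.closedBox v :=
  closure_minimal (fun _ hw α hα => mem_Icc_of_forall_int_iff (hw α hα) (hz α hα))
    (D.isClosed_closedBox v)

end RootData

lemma Hy_neg (α : V n) (k : ℝ) : Hy (-α) (-k) = Hy α k := by
  ext v
  simp [Hy, inner_neg_left]

lemma isClosed_Hy (α : V n) (k : ℝ) : IsClosed (Hy α k) :=
  isClosed_eq (continuous_const.inner continuous_id) continuous_const

lemma IsAlcove.subset_Hge_or_subset_Hle {D : RootData n} {c : Set (V n)} (hc : IsAlcove D c)
    {α : V n} (hα : α ∈ D.Φ) (k : ℤ) : c ⊆ Hge α k ∨ c ⊆ Hle α k := by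
  obtain ⟨v, -, rfl⟩ := D.isAlcove_iff.1 hc
  rcases le_or_gt (k : ℝ) ⟪α, v⟫ with h | h
  exacts [Or.inl (D.closedBox_subset_Hge hα h), Or.inr (D.closedBox_subset_Hle hα h)]

namespace RootData

variable (D : RootData n) {β v z : V n} {k : ℤ}

lemma closure_cell_eq_closedBox_inter (hz : z ∈ D.closedBox v)
    (hβ : β ∈ D.Φ) (hzβ : ⟪β, z⟫ = k) (hwall : ∀ α ∈ D.wallRoots z, α = β ∨ α = -β) :
    closure (D.cell z) = D.closedBox v ∩ Hy β k := by
  refine Subset.antisymm (subset_inter (D.closure_cell_subset_closedBox hz)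
    (closure_minimal (fun w hw => (hw β hβ k).1.2 hzβ) (isClosed_Hy _ _))) fun w ⟨hw, hwβ⟩ => ?_
  have hwz : ∀ α ∈ D.wallRoots z, ⟪α, w⟫ = ⟪α, z⟫ := by
    intro α hα
    rcases hwall α hα with rfl | rfl
    · rw [hwβ, hzβ]
    · rw [inner_neg_left, inner_neg_left, hwβ, hzβ]
  refine closure_mono ?_ (segment_subset_closure_openSegment (left_mem_segment ℝ w z))
  rintro _ ⟨a, b, ha, hb, hab, rfl⟩ α hα
  simp only [inner_add_right, real_inner_smul_right]
  by_cases hαz : α ∈ D.wallRoots z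
  · rw [hwz α hαz, ← add_mul, hab, one_mul]
    exact fun _ => ⟨Iff.rfl, Iff.rfl⟩
  have hzα : ⟪α, z⟫ ∈ Ioo (⌊⟪α, v⟫⌋ : ℝ) (⌊⟪α, v⟫⌋ + 1) := by
    obtain ⟨h1, h2⟩ := hz α hα
    refine ⟨h1.lt_of_ne fun h => hαz ⟨hα, _, h.symm⟩,
      h2.lt_of_ne fun h => hαz ⟨hα, ⌊⟪α, v⟫⌋ + 1, ?_⟩⟩
    push_cast
    exact h
  exact forall_int_iff_of_mem_Ioo (mul_add_mul_mem_Ioo (hw α hα) hzα ha hb hab) hzα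

lemma eq_Hy_of_closure_cell_subset (hzβ : ⟪β, z⟫ = k)
    (hwall : ∀ α ∈ D.wallRoots z, α = β ∨ α = -β) {H : Set (V n)} (hH : H ∈ hyperplanes D)
    (hsub : closure (D.cell z) ⊆ H) : H = Hy β k := by
  obtain ⟨α, hα, q, rfl⟩ := hH
  have hq : ⟪α, z⟫ = q := hsub (subset_closure (D.mem_cell_self z))
  rcases hwall α ⟨hα, q, hq⟩ with rfl | rfl
  · rw [← hq, hzβ]
  · rw [← hq, inner_neg_left, hzβ, Hy_neg]

theorem isPanelOf_closure_cell (hv : v ∉ wallUnion D) (hz : z ∈ D.closedBox v)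
    (hβ : β ∈ D.Φ) (hzβ : ⟪β, z⟫ = k) (hwall : ∀ α ∈ D.wallRoots z, α = β ∨ α = -β) :
    IsPanelOf D (closure (D.cell z)) (D.closedBox v) := by
  have hH : Hy β k ∈ hyperplanes D := ⟨β, hβ, k, rfl⟩
  have heq := D.closure_cell_eq_closedBox_inter hz hβ hzβ hwall
  exact ⟨D.isAlcove_iff.2 ⟨v, hv, rfl⟩, D.isFace_closure_cell z, ⟨_, hH, heq⟩,
    ⟨_, ⟨hH, heq ▸ inter_subset_right⟩,
      fun _ ⟨hH', hsub⟩ => D.eq_Hy_of_closure_cell_subset hzβ hwall hH' hsub⟩⟩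

end RootData

lemma IsPanelOf.subset {D : RootData n} {p c : Set (V n)} (h : IsPanelOf D p c) : p ⊆ c := by
  obtain ⟨-, -, ⟨H, -, rfl⟩, -⟩ := h
  exact inter_subset_left

theorem IsGallery.exists_panel_subset_Hy {D : RootData n} {γ : PreGallery n}
    (hγ : IsGallery D γ) {α x y : V n} (hα : α ∈ D.Φ) {k : ℤ} (hx : x ∈ γ.p 0)
    (hy : y ∈ γ.p (γ.len + 1)) (hxk : ⟪α, x⟫ < k) (hyk : (k : ℝ) < ⟪α, y⟫) :
    ∃ i ∈ Finset.Icc 1 γ.len, γ.p i ⊆ Hy α k := by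
  obtain ⟨halc, ⟨-, hx0⟩, ⟨-, hyl⟩, hpan⟩ := hγ
  have hside (i : ℕ) (hi : i ≤ γ.len) := (halc i hi).subset_Hge_or_subset_Hle hα k
  have hlen : γ.c γ.len ⊆ Hge α k :=
    (hside _ le_rfl).resolve_right fun h => (h (hyl hy)).not_gt hyk
  have hex : ∃ i, γ.c i ⊆ Hge α k := ⟨_, hlen⟩
  have hi : Nat.find hex ≤ γ.len := Nat.find_min' hex hlen
  have hi0 : Nat.find hex ≠ 0 := fun h0 => (Nat.find_spec hex (h0 ▸ hx0 hx)).not_gt hxk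
  have hprev : γ.c (Nat.find hex - 1) ⊆ Hle α k :=
    (hside _ (by omega)).resolve_left (Nat.find_min hex (by omega))
  obtain ⟨hp1, hp2⟩ := hpan (Nat.find hex) (by omega) hi
  exact ⟨Nat.find hex, Finset.mem_Icc.2 ⟨by omega, hi⟩,
    fun w hw => le_antisymm (hprev (hp1.subset hw)) (Nat.find_spec hex (hp2.subset hw))⟩

lemma inner_add_smul (α x d : V n) (t : ℝ) : ⟪α, x + t • d⟫ = ⟪α, x⟫ + t * ⟪α, d⟫ := by
  rw [inner_add_right, real_inner_smul_right]

lemma strictMono_inner_add_smul {α x d : V n} (hd : 0 < ⟪α, d⟫) :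
    StrictMono fun t : ℝ => ⟪α, x + t • d⟫ := fun s t hst => by
  simp only [inner_add_smul]
  exact (add_lt_add_iff_left _).2 (mul_lt_mul_of_pos_right hst hd)

structure IsGenericRay (D : RootData n) (x d : V n) : Prop where
  notMem_wallUnion : x ∉ wallUnion D
  eq_or_eq_neg : ∀ t : ℝ, ∀ α ∈ D.wallRoots (x + t • d), ∀ β ∈ D.wallRoots (x + t • d),
    β = α ∨ β = -α
  exists_inner_pos : ∃ α ∈ D.Φ, 0 < ⟪α, d⟫

def rayCrossings (D : RootData n) (x d : V n) : Set ℝ := {t | (D.wallRoots (x + t • d)).Nonempty}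

namespace IsGenericRay

variable {D : RootData n} {x d : V n}

lemma inner_ne_zero (h : IsGenericRay D x d) {t : ℝ} {α : V n}
    (hα : α ∈ D.wallRoots (x + t • d)) : ⟪α, d⟫ ≠ 0 := by
  obtain ⟨hαΦ, q, hq⟩ := hα
  intro h0
  rw [inner_add_smul, h0, mul_zero, add_zero] at hq
  exact D.notMem_wallUnion_iff.1 h.notMem_wallUnion α hαΦ q hq

lemma finite_rayCrossings_inter_Icc (h : IsGenericRay D x d) (a b : ℝ) :
    (rayCrossings D x d ∩ Icc a b).Finite := by
  refine ((D.finite.subset (sep_subset D.Φ fun α => ⟪α, d⟫ ≠ 0)).biUnion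
    fun α hα => finite_setOf_add_mul_eq_int (c := ⟪α, x⟫) hα.2 a b).subset ?_
  rintro t ⟨⟨α, hα, q, hq⟩, hab⟩
  exact mem_biUnion ⟨hα, h.inner_ne_zero ⟨hα, q, hq⟩⟩ ⟨hab, q, by rwa [← inner_add_smul]⟩

lemma exists_rayCrossings_gt (h : IsGenericRay D x d) (a : ℝ) :
    ∃ t ∈ rayCrossings D x d, a < t := by
  obtain ⟨α, hα, hd⟩ := h.exists_inner_pos
  set q : ℤ := ⌊⟪α, x + a • d⟫⌋ + 1
  refine ⟨(q - ⟪α, x⟫) / ⟪α, d⟫, ⟨α, hα, q, ?_⟩, ?_⟩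
  · rw [inner_add_smul, div_mul_cancel₀ _ hd.ne']
    ring
  · have := Int.lt_floor_add_one ⟪α, x + a • d⟫
    have hinner := inner_add_smul α x d a
    rw [lt_div_iff₀ hd]
    push_cast [q]
    linarith

noncomputable def time (h : IsGenericRay D x d) : ℕ → ℝ :=
  (exists_strictMono_enum h.finite_rayCrossings_inter_Icc h.exists_rayCrossings_gt).choose

lemma time_spec (h : IsGenericRay D x d) :
    h.time 0 = 0 ∧ StrictMono h.time ∧ (∀ i, h.time (i + 1) ∈ rayCrossings D x d) ∧
      (∀ i, ∀ t ∈ rayCrossings D x d, h.time i < t → h.time (i + 1) ≤ t) ∧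
      Tendsto h.time atTop atTop :=
  (exists_strictMono_enum h.finite_rayCrossings_inter_Icc h.exists_rayCrossings_gt).choose_spec

lemma time_zero (h : IsGenericRay D x d) : h.time 0 = 0 := h.time_spec.1

lemma strictMono_time (h : IsGenericRay D x d) : StrictMono h.time := h.time_spec.2.1

lemma time_succ_mem_rayCrossings (h : IsGenericRay D x d) (i : ℕ) :
    h.time (i + 1) ∈ rayCrossings D x d :=
  h.time_spec.2.2.1 i

lemma time_succ_le (h : IsGenericRay D x d) {i : ℕ} {t : ℝ} (ht : t ∈ rayCrossings D x d)
    (hit : h.time i < t) : h.time (i + 1) ≤ t :=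
  h.time_spec.2.2.2.1 i t ht hit

lemma tendsto_time (h : IsGenericRay D x d) : Tendsto h.time atTop atTop :=
  h.time_spec.2.2.2.2

noncomputable def sample (h : IsGenericRay D x d) (i : ℕ) : ℝ := (h.time i + h.time (i + 1)) / 2

lemma sample_mem_Ioo (h : IsGenericRay D x d) (i : ℕ) :
    h.sample i ∈ Ioo (h.time i) (h.time (i + 1)) := by
  have := h.strictMono_time (Nat.lt_succ_self i)
  exact ⟨by rw [sample]; linarith, by rw [sample]; linarith⟩

lemma sample_nonneg (h : IsGenericRay D x d) (i : ℕ) : 0 ≤ h.sample i :=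
  (h.time_zero ▸ h.strictMono_time.monotone (Nat.zero_le i)).trans (h.sample_mem_Ioo i).1.le

lemma tendsto_sample (h : IsGenericRay D x d) : Tendsto h.sample atTop atTop :=
  tendsto_atTop_mono (fun i => (h.sample_mem_Ioo i).1.le) h.tendsto_time

lemma notMem_wallUnion_of_mem_Ioo (h : IsGenericRay D x d) {i : ℕ} {t : ℝ}
    (ht : t ∈ Ioo (h.time i) (h.time (i + 1))) : x + t • d ∉ wallUnion D :=
  fun hw => (h.time_succ_le (D.mem_wallUnion_iff.1 hw) ht.1).not_gt ht.2

lemma mem_closedBox_sample (h : IsGenericRay D x d) {i : ℕ} {t : ℝ}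
    (ht : t ∈ Icc (h.time i) (h.time (i + 1))) : x + t • d ∈ D.closedBox (x + h.sample i • d) :=
  fun α hα => mem_Icc_floor_of_continuous (by fun_prop)
    (fun _ hr q => D.notMem_wallUnion_iff.1 (h.notMem_wallUnion_of_mem_Ioo hr) α hα q)
    (h.sample_mem_Ioo i) ht

lemma exists_crossing_wall (h : IsGenericRay D x d) (i : ℕ) :
    ∃ β ∈ D.Φ, ∃ k : ℤ, ⟪β, x + h.time (i + 1) • d⟫ = k ∧ 0 < ⟪β, d⟫ ∧
      ∀ α ∈ D.wallRoots (x + h.time (i + 1) • d), α = β ∨ α = -β := by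
  suffices ∃ β ∈ D.wallRoots (x + h.time (i + 1) • d), 0 < ⟪β, d⟫ by
    obtain ⟨β, ⟨hβ, k, hk⟩, hd⟩ := this
    exact ⟨β, hβ, k, hk, hd, fun α hα => h.eq_or_eq_neg _ β ⟨hβ, k, hk⟩ α hα⟩
  obtain ⟨α, hα⟩ := h.time_succ_mem_rayCrossings i
  rcases (h.inner_ne_zero hα).lt_or_gt with hneg | hpos
  · exact ⟨-α, D.neg_mem_wallRoots hα, by rwa [inner_neg_left, neg_pos]⟩
  · exact ⟨α, hα, hpos⟩

def alcove (h : IsGenericRay D x d) (i : ℕ) : Set (V n) := D.closedBox (x + h.sample i • d)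

def panel (h : IsGenericRay D x d) (i : ℕ) : Set (V n) :=
  closure (D.cell (x + h.time (i + 1) • d))

lemma isPanelOf_panel_alcove (h : IsGenericRay D x d) {i j : ℕ} (hj : j = i ∨ j = i + 1) :
    IsPanelOf D (h.panel i) (h.alcove j) := by
  obtain ⟨β, hβ, k, hk, -, hwall⟩ := h.exists_crossing_wall i
  refine D.isPanelOf_closure_cell (h.notMem_wallUnion_of_mem_Ioo (h.sample_mem_Ioo j))
    (h.mem_closedBox_sample ?_) hβ hk hwall
  have h1 := h.strictMono_time (Nat.lt_succ_self i)
  have h2 := h.strictMono_time (Nat.lt_succ_self (i + 1))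
  rcases hj with rfl | rfl
  exacts [⟨h1.le, le_rfl⟩, ⟨le_rfl, h2.le⟩]

def gallery (h : IsGenericRay D x d) : InfPreGallery n where
  p
    | 0 => closure (D.cell (x + h.sample 0 • d))
    | i + 1 => h.panel i
  c := h.alcove

theorem isInfGallery_gallery (h : IsGenericRay D x d) : IsInfGallery D h.gallery := by
  refine ⟨fun i => D.isAlcove_iff.2 ⟨_, h.notMem_wallUnion_of_mem_Ioo (h.sample_mem_Ioo i), rfl⟩,
    D.isFace_closure_cell _, D.closure_cell_subset_closedBox (D.mem_closedBox_self _), ?_⟩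
  rintro (_ | i) hi
  · omega
  · exact ⟨h.isPanelOf_panel_alcove (Or.inl rfl), h.isPanelOf_panel_alcove (Or.inr rfl)⟩

lemma isGallery_truncGallery (h : IsGenericRay D x d) (m : ℕ) :
    IsGallery D (truncGallery h.gallery m) := by
  obtain ⟨halc, hface, hsub, hpan⟩ := h.isInfGallery_gallery
  exact ⟨fun i _ => halc i, ⟨hface, hsub⟩,
    ⟨D.isFace_closure_cell _, (h.isPanelOf_panel_alcove (Or.inl rfl)).subset⟩,
    fun i hi _ => hpan i hi⟩

lemma exists_panel_subset_crossing_wall (h : IsGenericRay D x d) {γ : PreGallery n}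
    (hγ : IsGallery D γ) {m : ℕ} (h0 : γ.p 0 = h.gallery.p 0)
    (hl : γ.p (γ.len + 1) = h.panel m) {j : ℕ} (hj : j < m) :
    ∃ i ∈ Finset.Icc 1 γ.len, ∃ β ∈ D.Φ, ∃ k : ℤ,
      0 < ⟪β, d⟫ ∧ ⟪β, x + h.time (j + 1) • d⟫ = k ∧ γ.p i ⊆ Hy β k := by
  obtain ⟨β, hβ, k, hk, hd, -⟩ := h.exists_crossing_wall j
  have hmono := strictMono_inner_add_smul (x := x) hd
  have hx : x + h.sample 0 • d ∈ γ.p 0 := by rw [h0]; exact subset_closure (D.mem_cell_self _)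
  have hy : x + h.time (m + 1) • d ∈ γ.p (γ.len + 1) := by
    rw [hl]; exact subset_closure (D.mem_cell_self _)
  obtain ⟨i, hi, hsub⟩ := hγ.exists_panel_subset_Hy hβ hx hy
    (by rw [← hk]; exact hmono ((h.sample_mem_Ioo 0).2.trans_le
      (h.strictMono_time.monotone (by omega))))
    (by rw [← hk]; exact hmono (h.strictMono_time (by omega)))
  exact ⟨i, hi, β, hβ, k, hd, hk, hsub⟩

/-- A panel lies on a single wall, and the ray crosses each wall only once. -/
lemma subsingleton_crossing_walls (h : IsGenericRay D x d) {γ : PreGallery n}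
    (hγ : IsGallery D γ) {m i : ℕ} (hi : i ∈ Finset.Icc 1 γ.len) :
    ({j ∈ Finset.range m | ∃ β ∈ D.Φ, ∃ k : ℤ,
      0 < ⟪β, d⟫ ∧ ⟪β, x + h.time (j + 1) • d⟫ = k ∧ γ.p i ⊆ Hy β k} : Set ℕ).Subsingleton := by
  rintro j ⟨-, β, hβ, k, hd, hk, hsub⟩ j' ⟨-, β', hβ', k', -, hk', hsub'⟩
  obtain ⟨hi1, hi2⟩ := Finset.mem_Icc.1 hi
  have hH : Hy β' k' = Hy β k := (hγ.2.2.2 i hi1 hi2).2.2.2.2.unique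
    ⟨⟨β', hβ', k', rfl⟩, hsub'⟩ ⟨⟨β, hβ, k, rfl⟩, hsub⟩
  have hj' : x + h.time (j' + 1) • d ∈ Hy β k := hH ▸ hk'
  have := h.strictMono_time.injective ((strictMono_inner_add_smul hd).injective (hj'.trans hk.symm))
  omega

theorem infMinimal_gallery (h : IsGenericRay D x d) : InfMinimal D h.gallery := by
  refine fun m => ⟨h.isGallery_truncGallery m, fun γ hγ h0 hl => ?_⟩
  simpa using Finset.card_le_card_of_forall_subsingleton _
    (fun j hj => h.exists_panel_subset_crossing_wall hγ h0 hl (Finset.mem_range.1 hj))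
    (fun i hi => h.subsingleton_crossing_walls hγ hi)

end IsGenericRay

namespace RootData

variable (D : RootData n) {α v : V n}

def rootIsometries : Subgroup (Equiv.Perm (V n)) where
  carrier := {g | (∀ v w, ⟪g v, g w⟫ = ⟪v, w⟫) ∧ ⇑g '' D.Φ = D.Φ}
  mul_mem' := by
    rintro g g' ⟨hg, hgΦ⟩ ⟨hg', hg'Φ⟩
    exact ⟨fun v w => by simp only [Equiv.Perm.coe_mul, Function.comp_apply, hg, hg'],
      by rw [Equiv.Perm.coe_mul, image_comp, hg'Φ, hgΦ]⟩
  one_mem' := ⟨fun _ _ => rfl, by rw [Equiv.Perm.coe_one, image_id]⟩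
  inv_mem' := by
    rintro g ⟨hg, hgΦ⟩
    refine ⟨fun v w => by rw [← hg]; simp, ?_⟩
    calc ⇑g⁻¹ '' D.Φ = ⇑g⁻¹ '' (⇑g '' D.Φ) := by rw [hgΦ]
      _ = D.Φ := by rw [← image_comp]; simp

lemma sRefl_mem_rootIsometries (hα : α ∈ D.Φ) {e : Equiv.Perm (V n)} (he : ⇑e = sRefl α 0) :
    e ∈ D.rootIsometries := by
  have hαα : ⟪α, α⟫ ≠ 0 := inner_self_ne_zero.2 (D.nonzero α hα)
  have happ (v : V n) : e v = v - (2 * ⟪α, v⟫ / ⟪α, α⟫) • α := by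
    rw [he, sRefl, coroot, smul_smul, sub_zero]
    ring_nf
  have hmaps : ∀ β ∈ D.Φ, e β ∈ D.Φ := fun β hβ => by rw [happ]; exact D.reflect_mem α hα β hβ
  have hinv (v : V n) : e (e v) = v := by
    rw [happ (e v), happ v, inner_sub_right, real_inner_smul_right]
    field_simp
    module
  refine ⟨fun v w => ?_, Subset.antisymm (image_subset_iff.2 hmaps)
    fun β hβ => ⟨e β, hmaps β hβ, hinv β⟩⟩
  rw [happ, happ]
  simp only [inner_sub_left, inner_sub_right, real_inner_smul_left, real_inner_smul_right,
    real_inner_comm α]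
  field_simp
  ring

lemma FinW_le_rootIsometries : FinW D ≤ D.rootIsometries :=
  (Subgroup.closure_le _).2 fun _ ⟨_, hα, he⟩ => D.sRefl_mem_rootIsometries hα he

variable {D} {g : Equiv.Perm (V n)}

lemma inner_map_map (hg : g ∈ D.rootIsometries) (v w : V n) : ⟪g v, g w⟫ = ⟪v, w⟫ := hg.1 v w

lemma inner_apply_eq (hg : g ∈ D.rootIsometries) (α v : V n) : ⟪α, g v⟫ = ⟪g⁻¹ α, v⟫ := by
  rw [← inner_map_map hg (g⁻¹ α) v]
  simp

lemma map_mem (hg : g ∈ D.rootIsometries) (hα : α ∈ D.Φ) : g α ∈ D.Φ :=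
  hg.2 ▸ mem_image_of_mem g hα

lemma map_add_smul (hg : g ∈ D.rootIsometries) (v w : V n) (t : ℝ) :
    g (v + t • w) = g v + t • g w :=
  ext_inner_left ℝ fun z => by simp only [inner_add_right, real_inner_smul_right, inner_apply_eq hg]

lemma map_neg (hg : g ∈ D.rootIsometries) (v : V n) : g (-v) = -g v :=
  ext_inner_left ℝ fun z => by simp only [inner_neg_right, inner_apply_eq hg]

lemma forall_root_apply_iff (hg : g ∈ D.rootIsometries) {P : V n → Prop} :
    (∀ α ∈ D.Φ, P (g α)) ↔ ∀ α ∈ D.Φ, P α := by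
  conv_rhs => rw [← hg.2]
  exact forall_mem_image.symm

variable (D)

lemma exists_int_inner_of_mem_corootLattice {μ : V n} (hα : α ∈ D.Φ)
    (hμ : μ ∈ corootLattice D) : ∃ z : ℤ, ⟪α, μ⟫ = z := by
  obtain ⟨c, rfl⟩ := hμ
  have (i : Fin n) : ∃ z : ℤ, ⟪α, coroot (D.simple i)⟫ = z := by
    obtain ⟨m, hm⟩ := D.crystallographic _ (D.pos_sub (D.simple_mem i)) α hα
    exact ⟨m, by rw [← hm, coroot, real_inner_smul_right, real_inner_comm (D.simple i) α]; ring⟩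
  choose f hf using this
  exact ⟨∑ i, c i * f i, by simp [inner_sum, real_inner_smul_right, hf]⟩

variable {u : Equiv.Perm (V n)} {μ : V n}

lemma exists_int_inner_affine (hu : u ∈ D.rootIsometries) (hμ : μ ∈ corootLattice D)
    (hα : α ∈ D.Φ) : ∃ z : ℤ, ∀ v, ⟪α, u v + μ⟫ = ⟪u⁻¹ α, v⟫ + z := by
  obtain ⟨z, hz⟩ := D.exists_int_inner_of_mem_corootLattice hα hμ
  exact ⟨z, fun v => by rw [inner_add_right, inner_apply_eq hu, hz]⟩

lemma mem_wallRoots_affine (hu : u ∈ D.rootIsometries) (hμ : μ ∈ corootLattice D) :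
    α ∈ D.wallRoots (u v + μ) ↔ u⁻¹ α ∈ D.wallRoots v := by
  have hΦ : α ∈ D.Φ ↔ u⁻¹ α ∈ D.Φ :=
    ⟨map_mem (inv_mem hu), fun h => by simpa using map_mem hu h⟩
  refine ⟨fun ⟨hα, q, hq⟩ => ?_, fun ⟨hα, q, hq⟩ => ?_⟩
  · obtain ⟨z, hz⟩ := D.exists_int_inner_affine hu hμ hα
    exact ⟨hΦ.1 hα, q - z, by rw [hz] at hq; push_cast; linarith⟩
  · obtain ⟨z, hz⟩ := D.exists_int_inner_affine hu hμ (hΦ.2 hα)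
    exact ⟨hΦ.2 hα, q + z, by rw [hz, hq]; push_cast; ring⟩

lemma affine_notMem_wallUnion_iff (hu : u ∈ D.rootIsometries) (hμ : μ ∈ corootLattice D) :
    u v + μ ∉ wallUnion D ↔ v ∉ wallUnion D := by
  rw [not_iff_not, D.mem_wallUnion_iff, D.mem_wallUnion_iff]
  exact ⟨fun ⟨_, hα⟩ => ⟨_, (D.mem_wallRoots_affine hu hμ).1 hα⟩,
    fun ⟨α, hα⟩ => ⟨u α, (D.mem_wallRoots_affine hu hμ).2 (by simpa using hα)⟩⟩

lemma affine_mem_closedBox_iff (hu : u ∈ D.rootIsometries) (hμ : μ ∈ corootLattice D)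
    {w : V n} : u w + μ ∈ D.closedBox (u v + μ) ↔ w ∈ D.closedBox v := by
  have key : ∀ α ∈ D.Φ, ⟪α, u w + μ⟫ ∈ Icc (⌊⟪α, u v + μ⟫⌋ : ℝ) (⌊⟪α, u v + μ⟫⌋ + 1) ↔
      ⟪u⁻¹ α, w⟫ ∈ Icc (⌊⟪u⁻¹ α, v⟫⌋ : ℝ) (⌊⟪u⁻¹ α, v⟫⌋ + 1) := by
    intro α hα
    obtain ⟨z, hz⟩ := D.exists_int_inner_affine hu hμ hα
    simp only [hz, Int.floor_add_intCast, mem_Icc]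
    push_cast
    constructor <;> rintro ⟨h1, h2⟩ <;> constructor <;> linarith
  exact (forall₂_congr key).trans (forall_root_apply_iff (inv_mem hu)
    (P := fun a => ⟪a, w⟫ ∈ Icc (⌊⟪a, v⟫⌋ : ℝ) (⌊⟪a, v⟫⌋ + 1)))

lemma closedBox_affine (hu : u ∈ D.rootIsometries) (hμ : μ ∈ corootLattice D) (v : V n) :
    D.closedBox (u v + μ) = (fun w => u w + μ) '' D.closedBox v := by
  ext w
  refine ⟨fun hw => ⟨u⁻¹ (w - μ), (D.affine_mem_closedBox_iff hu hμ).1 (by simpa using hw),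
    by simp⟩, ?_⟩
  rintro ⟨w, hw, rfl⟩
  exact (D.affine_mem_closedBox_iff hu hμ).2 hw

end RootData


theorem IsGenericRay.affine {D : RootData n} {x d μ : V n} {u : Equiv.Perm (V n)}
    (h : IsGenericRay D x d) (hu : u ∈ D.rootIsometries) (hμ : μ ∈ corootLattice D) :
    IsGenericRay D (u x + μ) (u d) where
  notMem_wallUnion := (D.affine_notMem_wallUnion_iff hu hμ).2 h.notMem_wallUnion
  eq_or_eq_neg t α hα β hβ := by
    have e : u x + μ + t • u d = u (x + t • d) + μ := by
      rw [RootData.map_add_smul hu, add_right_comm]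
    rw [e, D.mem_wallRoots_affine hu hμ] at hα hβ
    rcases h.eq_or_eq_neg t _ hα _ hβ with h' | h'
    · exact Or.inl (u⁻¹.injective h')
    · exact Or.inr (u⁻¹.injective (by rw [h', RootData.map_neg (inv_mem hu)]))
  exists_inner_pos := by
    obtain ⟨α, hα, hd⟩ := h.exists_inner_pos
    exact ⟨u α, RootData.map_mem hu hα, by rwa [RootData.inner_map_map hu]⟩

namespace RootData

variable (D : RootData n) {α : V n}

noncomputable def simpleBasis : Module.Basis (Fin n) ℝ (V n) :=
  .mk D.simple_indep (D.simple_indep.span_eq_top_of_card_eq_finrank' (by simp)).ge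

lemma simpleBasis_repr_nonneg (hα : α ∈ D.pos) (i : Fin n) : 0 ≤ D.simpleBasis.repr α i := by
  obtain ⟨c, hc, rfl⟩ := D.pos_combo α hα
  have : ∑ j, c j • D.simple j = ∑ j, c j • D.simpleBasis j := by simp [simpleBasis]
  rw [this, Module.Basis.repr_sum_self]
  exact hc i

lemma exists_simpleBasis_repr_ne_zero (hα : α ≠ 0) : ∃ i, D.simpleBasis.repr α i ≠ 0 := by
  by_contra! h
  exact hα (D.simpleBasis.repr.map_eq_zero_iff.1 (Finsupp.ext (by simpa using h)))

lemma mem_PhiJpos_iff {J : Set (Fin n)} (hα : α ∈ D.pos) :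
    α ∈ PhiJpos D J ↔ ∀ i ∉ J, D.simpleBasis.repr α i = 0 := by
  have : D.simple '' J = D.simpleBasis '' J := by simp [simpleBasis]
  simp only [PhiJpos, PhiJ, mem_inter_iff, mem_ofPred_eq, this, Module.Basis.mem_span_image,
    hα, D.pos_sub hα, true_and]
  exact ⟨fun h i hi => by_contra fun h' => hi (h (Finsupp.mem_support_iff.2 h')),
    fun h i hi => by_contra fun h' => Finsupp.mem_support_iff.1 hi (h i h')⟩

lemma exists_inner_eq_sum_repr (w : Fin n → ℝ) :
    ∃ e : V n, ∀ v, ⟪v, e⟫ = ∑ i, w i * D.simpleBasis.repr v i := by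
  refine ⟨(InnerProductSpace.toDual ℝ (V n)).symm
    (LinearMap.toContinuousLinearMap (∑ i, w i • D.simpleBasis.coord i)), fun v => ?_⟩
  rw [real_inner_comm, InnerProductSpace.toDual_symm_apply]
  simp

lemma sum_mul_repr_pos (hα : α ∈ D.pos) {w : Fin n → ℝ} (hw : ∀ i, 0 ≤ w i)
    (hpos : ∃ i, 0 < w i ∧ D.simpleBasis.repr α i ≠ 0) :
    0 < ∑ i, w i * D.simpleBasis.repr α i := by
  obtain ⟨i, hwi, hi⟩ := hpos
  exact Finset.sum_pos' (fun j _ => mul_nonneg (hw j) (D.simpleBasis_repr_nonneg hα j))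
    ⟨i, Finset.mem_univ i, mul_pos hwi ((D.simpleBasis_repr_nonneg hα i).lt_of_ne' hi)⟩

lemma exists_inner_pos_of_mem_pos : ∃ ρ : V n, ∀ α ∈ D.pos, 0 < ⟪α, ρ⟫ := by
  obtain ⟨ρ, hρ⟩ := D.exists_inner_eq_sum_repr 1
  refine ⟨ρ, fun α hα => hρ α ▸ D.sum_mul_repr_pos hα (fun _ => zero_le_one) ?_⟩
  obtain ⟨i, hi⟩ := D.exists_simpleBasis_repr_ne_zero (D.nonzero α (D.pos_sub hα))
  exact ⟨i, one_pos, hi⟩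

lemma exists_sector_directions (J : Set (Fin n)) :
    ∃ e f : V n, (∀ a ∈ PhiJpos D J, ⟪a, e⟫ = 0 ∧ 0 < ⟪a, f⟫) ∧
      ∀ β ∈ D.pos \ PhiJpos D J, 0 < ⟪β, e⟫ := by
  obtain ⟨e, he⟩ := D.exists_inner_eq_sum_repr (Jᶜ.indicator 1)
  obtain ⟨f, hf⟩ := D.exists_inner_eq_sum_repr (J.indicator 1)
  have hnonneg (s : Set (Fin n)) (i : Fin n) : 0 ≤ s.indicator (1 : Fin n → ℝ) i :=
    Set.indicator_nonneg (fun _ _ => zero_le_one) i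
  refine ⟨e, f, fun a ha => ⟨?_, ?_⟩, fun β hβ => ?_⟩
  · have := (D.mem_PhiJpos_iff ha.1).1 ha
    rw [he]
    exact Finset.sum_eq_zero fun i _ => by by_cases hi : i ∈ J <;> simp [hi, this]
  · obtain ⟨i, hi⟩ := D.exists_simpleBasis_repr_ne_zero (D.nonzero a ha.2.1)
    have hiJ : i ∈ J := by_contra fun h => hi ((D.mem_PhiJpos_iff ha.1).1 ha i h)
    rw [hf]
    exact D.sum_mul_repr_pos ha.1 (hnonneg J) ⟨i, by simp [hiJ], hi⟩
  · obtain ⟨i, hiJ, hi⟩ : ∃ i ∉ J, D.simpleBasis.repr β i ≠ 0 := by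
      by_contra! h
      exact hβ.2 ((D.mem_PhiJpos_iff hβ.1).2 h)
    rw [he]
    exact D.sum_mul_repr_pos hβ.1 (hnonneg Jᶜ) ⟨i, by simp [hiJ], hi⟩

lemma finite_PhiJpos (J : Set (Fin n)) : (PhiJpos D J).Finite :=
  D.finite.subset fun _ ha => ha.2.1

lemma finite_pos_diff_PhiJpos (J : Set (Fin n)) : (D.pos \ PhiJpos D J).Finite :=
  D.finite.subset fun _ hβ => D.pos_sub hβ.1

lemma exists_sector_base_direction (J : Set (Fin n)) (nb : V n → ℤ) :
    ∃ b d : V n, (∀ a ∈ PhiJpos D J, ⟪a, d⟫ = 0 ∧ 0 < ⟪a, b⟫ ∧ ⟪a, b⟫ < 1) ∧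
      ∀ β ∈ D.pos \ PhiJpos D J, ⟪β, d⟫ < 0 ∧ ⟪β, b⟫ < nb β := by
  obtain ⟨e, f, hJ, hnJ⟩ := D.exists_sector_directions J
  obtain ⟨ε, hε⟩ : ∃ ε : ℝ, ∀ a ∈ PhiJpos D J, 0 < ε * ⟪a, f⟫ ∧ ε * ⟪a, f⟫ < 1 := by
    refine ((eventually_all_finite (D.finite_PhiJpos J)).2 fun a ha => ?_).exists (f := 𝓝[>] 0)
    have hc := (hJ a ha).2
    filter_upwards [Ioo_mem_nhdsGT (inv_pos.2 hc)] with ε hε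
    have := mul_lt_mul_of_pos_right hε.2 hc
    rw [inv_mul_cancel₀ hc.ne'] at this
    exact ⟨mul_pos hε.1 hc, this⟩
  obtain ⟨T, hT⟩ : ∃ T : ℝ, ∀ β ∈ D.pos \ PhiJpos D J, ε * ⟪β, f⟫ - T * ⟪β, e⟫ < nb β := by
    refine ((eventually_all_finite (D.finite_pos_diff_PhiJpos J)).2
      fun β hβ => ?_).exists (f := atTop)
    filter_upwards [eventually_gt_atTop ((ε * ⟪β, f⟫ - nb β) / ⟪β, e⟫)] with T hT
    rw [div_lt_iff₀ (hnJ β hβ)] at hT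
    linarith
  refine ⟨ε • f - T • e, -e, fun a ha => ?_, fun β hβ => ?_⟩
  · simp only [inner_neg_right, inner_sub_right, real_inner_smul_right, (hJ a ha).1]
    simpa using hε a ha
  · simp only [inner_neg_right, inner_sub_right, real_inner_smul_right]
    exact ⟨neg_neg_of_pos (hnJ β hβ), hT β hβ⟩

end RootData

lemma dense_setOf_inner_ne {w : V n} (hw : w ≠ 0) (c : ℝ) : Dense {x : V n | ⟪w, x⟫ ≠ c} := by
  change Dense {x : V n | ⟪w, x⟫ = c}ᶜ
  refine interior_eq_empty_iff_dense_compl.1 (eq_empty_iff_forall_notMem.2 fun x hx => ?_)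
  have hlim : Tendsto (fun t : ℝ => x + t • w) (𝓝[≠] 0) (𝓝 x) := by
    have : Continuous fun t : ℝ => x + t • w := by fun_prop
    simpa using this.continuousAt.tendsto.mono_left (nhdsWithin_le_nhds (a := (0 : ℝ)))
  obtain ⟨t, ht, ht0⟩ :=
    ((hlim.eventually (mem_interior_iff_mem_nhds.1 hx)).and self_mem_nhdsWithin).exists
  have ht' : ⟪w, x + t • w⟫ = c := ht
  rw [inner_add_smul, interior_subset hx, add_eq_left] at ht'
  exact mul_ne_zero ht0 (inner_self_ne_zero.2 hw) ht'

lemma eventually_residual_inner_ne {w : V n} (hw : w ≠ 0) (c : ℝ) :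
    ∀ᶠ x in residual (V n), ⟪w, x⟫ ≠ c :=
  residual_of_dense_open (isOpen_ne_fun (by fun_prop) continuous_const)
    (dense_setOf_inner_ne hw c)

namespace RootData

variable (D : RootData n) {α β x d : V n}

lemma smul_sub_smul_ne_zero (hα : α ∈ D.Φ) (hβ : β ∈ D.Φ) (h1 : β ≠ α) (h2 : β ≠ -α)
    {a b : ℝ} (hb : b ≠ 0) : a • α - b • β ≠ 0 := by
  intro h0
  have hβα : (a / b) • α = β := by
    rw [div_eq_inv_mul, mul_smul, sub_eq_zero.1 h0, smul_smul, inv_mul_cancel₀ hb, one_smul]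
  rcases D.reduced α hα (a / b) (hβα ▸ hβ) with h | h
  · exact h1 (by rw [← hβα, h, one_smul])
  · exact h2 (by rw [← hβα, h, neg_one_smul])

/-- The second family of excluded hyperplanes comes from eliminating `t` between
`⟪α, x + t • d⟫ = q` and `⟪β, x + t • d⟫ = q'`. -/
lemma eventually_residual_generic (d : V n) : ∀ᶠ x in residual (V n),
    (∀ α ∈ D.Φ, ∀ q : ℤ, ⟪α, x⟫ ≠ q) ∧ ∀ α ∈ D.Φ, ∀ β ∈ D.Φ, β ≠ α → β ≠ -α → ⟪α, d⟫ ≠ 0 →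
      ∀ q q' : ℤ, ⟪⟪β, d⟫ • α - ⟪α, d⟫ • β, x⟫ ≠ ⟪β, d⟫ * q - ⟪α, d⟫ * q' := by
  have hΦ := D.finite.countable
  refine ((eventually_countable_ball hΦ).2 fun α hα => eventually_countable_forall.2
    fun q : ℤ => eventually_residual_inner_ne (D.nonzero α hα) q).and ?_
  refine (eventually_countable_ball hΦ).2 fun α hα => (eventually_countable_ball hΦ).2
    fun β hβ => ?_
  simp only [eventually_imp_distrib_left]
  exact fun h1 h2 hd => eventually_countable_forall.2 fun q => eventually_countable_forall.2
    fun q' => eventually_residual_inner_ne (D.smul_sub_smul_ne_zero hα hβ h1 h2 hd) _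

lemma isGenericRay_of_forall (hx : ∀ α ∈ D.Φ, ∀ q : ℤ, ⟪α, x⟫ ≠ q)
    (hgen : ∀ α ∈ D.Φ, ∀ β ∈ D.Φ, β ≠ α → β ≠ -α → ⟪α, d⟫ ≠ 0 →
      ∀ q q' : ℤ, ⟪⟪β, d⟫ • α - ⟪α, d⟫ • β, x⟫ ≠ ⟪β, d⟫ * q - ⟪α, d⟫ * q')
    (hd : ∃ α ∈ D.Φ, 0 < ⟪α, d⟫) : IsGenericRay D x d where
  notMem_wallUnion := D.notMem_wallUnion_iff.2 hx
  eq_or_eq_neg t α := fun ⟨hα, q, hq⟩ β ⟨hβ, q', hq'⟩ => by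
    by_contra! hne
    rw [inner_add_smul] at hq hq'
    have hαd : ⟪α, d⟫ ≠ 0 := fun h0 => hx α hα q (by rwa [h0, mul_zero, add_zero] at hq)
    refine hgen α hα β hβ hne.1 hne.2 hαd q q' ?_
    rw [inner_sub_left, real_inner_smul_left, real_inner_smul_left]
    linear_combination ⟪β, d⟫ * hq - ⟪α, d⟫ * hq'
  exists_inner_pos := hd

theorem exists_isGenericRay_sector (J : Set (Fin n)) (nb : V n → ℤ) {β₀ : V n}
    (hβ₀ : β₀ ∈ D.pos \ PhiJpos D J) :
    ∃ x d : V n, (∀ a ∈ PhiJpos D J, ⟪a, d⟫ = 0 ∧ 0 < ⟪a, x⟫ ∧ ⟪a, x⟫ < 1) ∧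
      (∀ β ∈ D.pos \ PhiJpos D J, ⟪β, d⟫ < 0 ∧ ⟪β, x⟫ < nb β) ∧ IsGenericRay D x d := by
  obtain ⟨b, d, hbJ, hbnJ⟩ := D.exists_sector_base_direction J nb
  set U := {x : V n | (∀ a ∈ PhiJpos D J, 0 < ⟪a, x⟫ ∧ ⟪a, x⟫ < 1) ∧
    ∀ β ∈ D.pos \ PhiJpos D J, ⟪β, x⟫ < nb β}
  have hU : IsOpen U := by
    refine isOpen_iff_mem_nhds.2 fun y ⟨hyJ, hynJ⟩ => ?_
    have hc (α : V n) : Tendsto (fun z => ⟪α, z⟫) (𝓝 y) (𝓝 ⟪α, y⟫) :=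
      (continuous_const.inner continuous_id).tendsto y
    exact ((eventually_all_finite (D.finite_PhiJpos J)).2 fun a ha =>
      ((hc a).eventually (lt_mem_nhds (hyJ a ha).1)).and
        ((hc a).eventually (gt_mem_nhds (hyJ a ha).2))).and
      ((eventually_all_finite (D.finite_pos_diff_PhiJpos J)).2 fun β hβ =>
        (hc β).eventually (gt_mem_nhds (hynJ β hβ)))
  obtain ⟨x, ⟨hxJ, hxnJ⟩, hx, hgen⟩ :=
    (dense_of_mem_residual (D.eventually_residual_generic d)).inter_open_nonempty U hU
      ⟨b, fun a ha => (hbJ a ha).2, fun β hβ => (hbnJ β hβ).2⟩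
  refine ⟨x, d, fun a ha => ⟨(hbJ a ha).1, hxJ a ha⟩, fun β hβ => ⟨(hbnJ β hβ).1, hxnJ β hβ⟩,
    D.isGenericRay_of_forall hx hgen ⟨-β₀, D.neg_mem _ (D.pos_sub hβ₀.1), ?_⟩⟩
  rw [inner_neg_left]
  linarith [(hbnJ β₀ hβ₀).1]

end RootData

lemma eventually_inner_add_smul_lt {α x d : V n} (hd : ⟪α, d⟫ < 0) (c : ℝ) :
    ∀ᶠ s : ℝ in atTop, ⟪α, x + s • d⟫ < c := by
  filter_upwards [eventually_gt_atTop ((⟪α, x⟫ - c) / -⟪α, d⟫)] with s hs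
  rw [div_lt_iff₀ (neg_pos.2 hd)] at hs
  rw [inner_add_smul]
  linarith

namespace RootData

variable (D : RootData n) {α β : V n} {J : Set (Fin n)} {w0 u : Equiv.Perm (V n)}
  {nb : V n → ℤ} {μ : V n}

lemma halfFor_one (hα : α ∈ D.pos) (k : ℝ) : halfFor D α k 1 = Hge α k :=
  if_pos fun _ hv => hv α hα

lemma halfFor_mul_longest (hw0 : IsLongest D w0) (hu : ∀ v w, ⟪u v, u w⟫ = ⟪v, w⟫)
    (hβ : β ∈ D.pos) (k : ℝ) : halfFor D (u β) k (u * w0) = Hle (u β) k := by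
  obtain ⟨ρ, hρ⟩ := D.exists_inner_pos_of_mem_pos
  obtain ⟨v, hv, hvρ⟩ : -ρ ∈ ⇑w0 '' Cf D := by
    rw [hw0.2]
    exact fun α hα => by simpa using (hρ α hα).le
  refine if_neg fun hall => ?_
  have := hall v hv
  rw [Equiv.Perm.mul_apply, hu, hvρ, inner_neg_right] at this
  linarith [hρ β hβ]

lemma halfFor_longest (hw0 : IsLongest D w0) (hβ : β ∈ D.pos) (k : ℝ) :
    halfFor D β k w0 = Hle β k := by
  simpa using D.halfFor_mul_longest hw0 (u := 1) (fun _ _ => rfl) hβ k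

lemma mem_sectorJ_iff (hw0 : IsLongest D w0) {w : V n} :
    w ∈ sectorJ D J w0 nb ↔ (∀ a ∈ PhiJpos D J, 0 ≤ ⟪a, w⟫ ∧ ⟪a, w⟫ ≤ 1) ∧
      ∀ β ∈ D.pos \ PhiJpos D J, ⟪β, w⟫ ≤ nb β := by
  simp only [sectorJ, mem_inter_iff, mem_iInter₂]
  refine and_congr (forall₂_congr fun a ha => ?_) (forall₂_congr fun β hβ => ?_)
  · rw [D.halfFor_one ha.1, D.halfFor_longest hw0 ha.1]
    rfl
  · rw [D.halfFor_longest hw0 hβ.1]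
    rfl

lemma closedBox_subset_sectorJ (hw0 : IsLongest D w0) {p : V n}
    (hJ : ∀ a ∈ PhiJpos D J, 0 < ⟪a, p⟫ ∧ ⟪a, p⟫ < 1)
    (hnJ : ∀ β ∈ D.pos \ PhiJpos D J, ⟪β, p⟫ < nb β) : D.closedBox p ⊆ sectorJ D J w0 nb := by
  refine fun w hw => (D.mem_sectorJ_iff hw0).2 ⟨fun a ha => ⟨?_, ?_⟩, fun β hβ => ?_⟩
  · exact_mod_cast D.closedBox_subset_Hge ha.2.1 (q := 0) (by exact_mod_cast (hJ a ha).1.le) hw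
  · exact_mod_cast D.closedBox_subset_Hle ha.2.1 (q := 1) (by exact_mod_cast (hJ a ha).2) hw
  · exact D.closedBox_subset_Hle (D.pos_sub hβ.1) (hnJ β hβ) hw

lemma inner_mem_Ioo_of_mem_sectorJ (hw0 : IsLongest D w0) (hJ : D.pos \ PhiJpos D J = ∅)
    {w : V n} (hw : w ∉ wallUnion D) (hws : w ∈ sectorJ D J w0 nb) (hα : α ∈ D.pos) :
    ⟪α, w⟫ ∈ Ioo (0 : ℝ) 1 := by
  have hαJ : α ∈ PhiJpos D J := by_contra fun h => (hJ.subset ⟨hα, h⟩ : α ∈ (∅ : Set (V n)))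
  obtain ⟨h0, h1⟩ := ((D.mem_sectorJ_iff hw0).1 hws).1 α hαJ
  have hne := D.notMem_wallUnion_iff.1 hw α (D.pos_sub hα)
  exact ⟨h0.lt_of_ne (by simpa using (hne 0).symm), h1.lt_of_ne (by simpa using hne 1)⟩

lemma closedBox_eq_of_mem_sectorJ (hw0 : IsLongest D w0) (hJ : D.pos \ PhiJpos D J = ∅)
    {w w' : V n} (hw : w ∉ wallUnion D) (hw' : w' ∉ wallUnion D)
    (hws : w ∈ sectorJ D J w0 nb) (hws' : w' ∈ sectorJ D J w0 nb) :
    D.closedBox w = D.closedBox w' := by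
  refine D.closedBox_congr fun α hα => ?_
  rcases D.pos_total α hα with hpos | hneg
  · rw [Int.floor_eq_zero_iff.2 (Ioo_subset_Ico_self
      (D.inner_mem_Ioo_of_mem_sectorJ hw0 hJ hw hws hpos)), Int.floor_eq_zero_iff.2
      (Ioo_subset_Ico_self (D.inner_mem_Ioo_of_mem_sectorJ hw0 hJ hw' hws' hpos))]
  · have h := D.inner_mem_Ioo_of_mem_sectorJ hw0 hJ hw hws hneg
    have h' := D.inner_mem_Ioo_of_mem_sectorJ hw0 hJ hw' hws' hneg
    rw [inner_neg_left, mem_Ioo] at h h'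
    rw [(Int.floor_eq_iff (z := -1)).2 ⟨by push_cast; linarith, by push_cast; linarith⟩,
      (Int.floor_eq_iff (z := -1)).2 ⟨by push_cast; linarith, by push_cast; linarith⟩]

lemma sectorJY_eq {y : AffW D} (hy : ∀ v : V n, (y : Equiv.Perm (V n)) v = u v + μ) :
    sectorJY D J w0 y nb = (fun v => u v + μ) '' sectorJ D J w0 nb := by
  change ⇑(y : Equiv.Perm (V n)) '' _ = _
  rw [show ⇑(y : Equiv.Perm (V n)) = fun v => u v + μ from funext hy]

theorem eq_of_isAlcove_of_subset_sectorJY (hw0 : IsLongest D w0) (hu : u ∈ D.rootIsometries)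
    (hμ : μ ∈ corootLattice D) {y : AffW D}
    (hy : ∀ v : V n, (y : Equiv.Perm (V n)) v = u v + μ) (hJ : D.pos \ PhiJpos D J = ∅)
    {c c' : Set (V n)} (hc : IsAlcove D c) (hc' : IsAlcove D c')
    (hcs : c ⊆ sectorJY D J w0 y nb) (hcs' : c' ⊆ sectorJY D J w0 y nb) : c = c' := by
  have key (c : Set (V n)) (hc : IsAlcove D c) (hcs : c ⊆ sectorJY D J w0 y nb) :
      ∃ w ∉ wallUnion D, w ∈ sectorJ D J w0 nb ∧ c = (fun v => u v + μ) '' D.closedBox w := by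
    obtain ⟨v, hv, rfl⟩ := D.isAlcove_iff.1 hc
    obtain ⟨w, hws, rfl⟩ := D.sectorJY_eq hy ▸ hcs (D.mem_closedBox_self v)
    exact ⟨w, (D.affine_notMem_wallUnion_iff hu hμ).1 hv, hws, D.closedBox_affine hu hμ w⟩
  obtain ⟨w, hw, hws, rfl⟩ := key c hc hcs
  obtain ⟨w', hw', hws', rfl⟩ := key c' hc' hcs'
  rw [D.closedBox_eq_of_mem_sectorJ hw0 hJ hw hw' hws hws']

end RootData

/-- Corollary: every `(J,y)`-sector which is not a single alcove contains a
regular minimal infinite gallery. -/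
theorem sector_contains_regular_gallery {n : ℕ} (D : RootData n)
    (J : Set (Fin n)) (w0 : Equiv.Perm (V n)) (hw0 : IsLongest D w0)
    (nb : V n → ℤ) (y : AffW D)
    (u : Equiv.Perm (V n)) (hu : u ∈ FinW D)
    (μ : V n) (hμ : μ ∈ corootLattice D)
    (hy : ∀ v : V n, (y : Equiv.Perm (V n)) v = u v + μ)
    (hmulti : ∃ c c', IsAlcove D c ∧ IsAlcove D c' ∧ c ⊆ sectorJY D J w0 y nb ∧
      c' ⊆ sectorJY D J w0 y nb ∧ c ≠ c') :
    ∃ Γ : InfPreGallery n, IsInfGallery D Γ ∧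
      (∀ i, Γ.c i ⊆ sectorJY D J w0 y nb) ∧
      InfMinimal D Γ ∧ RegularWrt D J w0 u μ nb Γ := by
  have hu' : u ∈ D.rootIsometries := D.FinW_le_rootIsometries hu
  obtain hJ | ⟨β₀, hβ₀⟩ := (D.pos \ PhiJpos D J).eq_empty_or_nonempty
  · obtain ⟨c, c', hc, hc', hcs, hcs', hne⟩ := hmulti
    exact absurd (D.eq_of_isAlcove_of_subset_sectorJY hw0 hu' hμ hy hJ hc hc' hcs hcs') hne
  obtain ⟨x, d, hxJ, hxnJ, hgen⟩ := D.exists_isGenericRay_sector J nb hβ₀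
  have R := hgen.affine hu' hμ
  have hc (i : ℕ) : R.gallery.c i = (fun v => u v + μ) '' D.closedBox (x + R.sample i • d) := by
    rw [← D.closedBox_affine hu' hμ, RootData.map_add_smul hu', add_right_comm]
    rfl
  refine ⟨R.gallery, R.isInfGallery_gallery, fun i => ?_, R.infMinimal_gallery,
    fun β hβ k _ => ?_⟩
  · rw [hc, D.sectorJY_eq hy]
    refine image_mono (D.closedBox_subset_sectorJ hw0 (fun a ha => ?_) fun β hβ => ?_)
    · simpa [inner_add_smul, (hxJ a ha).1] using (hxJ a ha).2
    · rw [inner_add_smul]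
      nlinarith [hxnJ β hβ, R.sample_nonneg i]
  · rw [D.halfFor_mul_longest hw0 hu'.1 hβ.1]
    have hd : ⟪u β, u d⟫ < 0 := by rw [RootData.inner_map_map hu']; exact (hxnJ β hβ).1
    obtain ⟨i, hi⟩ := (R.tendsto_sample.eventually (eventually_inner_add_smul_lt hd k)).exists
    exact ⟨i, D.closedBox_subset_Hle (RootData.map_mem hu' (D.pos_sub hβ.1)) hi⟩
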